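/- Let f : ℝⁿ → ℝ be differentiable at a point x with f(x) ≠ 0 or ∇f(x) ≠ 0, and suppose additionally that at x the Hessian vanishes in the sense that the functions x ↦ ‖∇f(x)‖ and x ↦ f(x) are differentiable at x with ∇‖∇f‖(x) = 0 (as holds when f is locally affine at x). Define f̂(x) = f(x) / (‖∇f(x)‖ + |f(x)|). Then ‖∇f̂(x)‖ = (‖∇f(x)‖ / (‖∇f(x)‖ + |f(x)|))² ≤ 1. -/

import Mathlib

open scoped RealInnerProductSpace
open InnerProductSpace Set Topology

/-!
Near `x` the gradient of `f` is the constant `a`, so `f / (‖∇f‖ + |f|)` is `φ ∘ f` with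
`φ s = s / (‖a‖ + |s|)`. For `‖a‖ > 0` the map `φ` is differentiable everywhere with
`φ' s = ‖a‖ / (‖a‖ + |s|) ^ 2` (at `s = 0` both one-sided branches `s / (‖a‖ ± s)` have slope
`1 / ‖a‖`), so the chain rule gives `∇f̂ x = (‖a‖ / (‖a‖ + |f x|) ^ 2) • a`; for `a = 0` the
normalized function is locally constant.
-/

theorem hasDerivAt_div_add_abs {k : ℝ} (hk : 0 < k) (t : ℝ) :
    HasDerivAt (fun s => s / (k + |s|)) (k / (k + |t|) ^ 2) t := by
  have hpos : ∀ u ≥ 0,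
      HasDerivWithinAt (fun s => s / (k + |s|)) (k / (k + |u|) ^ 2) (Ici 0) u := by
    intro u hu
    have := (hasDerivAt_id' u).fun_div ((hasDerivAt_id' u).const_add k) (by positivity)
    refine (this.hasDerivWithinAt.congr (fun s hs => ?_) ?_).congr_deriv ?_
    · rw [abs_of_nonneg hs]
    · rw [abs_of_nonneg hu]
    · rw [abs_of_nonneg hu]; ring
  have hneg : ∀ u ≤ 0,
      HasDerivWithinAt (fun s => s / (k + |s|)) (k / (k + |u|) ^ 2) (Iic 0) u := by
    intro u hu
    have := (hasDerivAt_id' u).fun_div ((hasDerivAt_id' u).const_sub k) (by linarith)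
    refine (this.hasDerivWithinAt.congr (fun s hs => ?_) ?_).congr_deriv ?_
    · rw [abs_of_nonpos hs, ← sub_eq_add_neg]
    · rw [abs_of_nonpos hu, ← sub_eq_add_neg]
    · rw [abs_of_nonpos hu, ← sub_eq_add_neg]; ring
  rcases lt_trichotomy t 0 with ht | rfl | ht
  · exact (hneg t ht.le).hasDerivAt (Iic_mem_nhds ht)
  · simpa [Iic_union_Ici] using (hneg 0 le_rfl).union (hpos 0 le_rfl)
  · exact (hpos t ht.le).hasDerivAt (Ici_mem_nhds ht)

variable {F : Type*} [NormedAddCommGroup F] [InnerProductSpace ℝ F] [CompleteSpace F]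

theorem hasGradientAt_inner_add_const (a : F) (c : ℝ) (y : F) :
    HasGradientAt (fun z => ⟪a, z⟫ + c) a y := by
  rw [hasGradientAt_iff_hasFDerivAt]
  simpa using ((toDual ℝ F a : StrongDual ℝ F).hasFDerivAt (x := y)).add_const c

theorem hasGradientAt_affine_div_norm_add_abs (a : F) (c : ℝ) (x : F) :
    HasGradientAt (fun y => (⟪a, y⟫ + c) / (‖a‖ + |⟪a, y⟫ + c|))
      ((‖a‖ / (‖a‖ + |⟪a, x⟫ + c|) ^ 2) • a) x := by
  rcases eq_or_ne a 0 with rfl | ha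
  · simpa using hasGradientAt_const x (c / |c|)
  · rw [hasGradientAt_iff_hasFDerivAt, map_smul]
    exact (hasDerivAt_div_add_abs (norm_pos_iff.2 ha) _).comp_hasFDerivAt x
      (hasGradientAt_inner_add_const a c x).hasFDerivAt

theorem eventually_gradient_eq_of_eventually_eq_inner_add_const {f : F → ℝ} {x a : F} {c : ℝ}
    (hloc : ∀ᶠ y in 𝓝 x, f y = ⟪a, y⟫ + c) : ∀ᶠ y in 𝓝 x, gradient f y = a :=
  hloc.eventually_nhds.mono fun y hy =>
    (Filter.EventuallyEq.gradient_eq hy).trans (hasGradientAt_inner_add_const a c y).gradient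

theorem gradient_normalization_norm_bounded_general
    (n : ℕ) (f : EuclideanSpace ℝ (Fin n) → ℝ)
    (x a : EuclideanSpace ℝ (Fin n)) (c : ℝ)
    (hloc : ∀ᶠ y in nhds x, f y = ⟪a, y⟫ + c) :
    ‖gradient (fun y => f y / (‖gradient f y‖ + |f y|)) x‖
      = (‖gradient f x‖ / (‖gradient f x‖ + |f x|)) ^ 2 ∧
    (‖gradient f x‖ / (‖gradient f x‖ + |f x|)) ^ 2 ≤ 1 := by
  have hgrad := eventually_gradient_eq_of_eventually_eq_inner_add_const hloc
  have hnormalized : (fun y => f y / (‖gradient f y‖ + |f y|)) =ᶠ[𝓝 x]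
      fun y => (⟪a, y⟫ + c) / (‖a‖ + |⟪a, y⟫ + c|) := by
    filter_upwards [hloc, hgrad] with y hfy hgy
    rw [hfy, hgy]
  rw [hnormalized.gradient_eq, (hasGradientAt_affine_div_norm_add_abs a c x).gradient,
    hgrad.self_of_nhds, hloc.self_of_nhds, norm_smul, Real.norm_of_nonneg (by positivity)]
  refine ⟨by rw [div_pow]; ring, pow_le_one₀ (by positivity) ?_⟩
  exact div_le_one_of_le₀ (le_add_of_nonneg_right (abs_nonneg _)) (by positivity)

theorem gradient_normalization_norm_bounded
    (n : ℕ) (f : EuclideanSpace ℝ (Fin n) → ℝ)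
    (x a : EuclideanSpace ℝ (Fin n)) (c : ℝ)
    (hloc : ∀ᶠ y in nhds x, f y = ⟪a, y⟫ + c)
    (ha : a ≠ 0 ∨ c ≠ 0) :
    ‖gradient (fun y => f y / (‖gradient f y‖ + |f y|)) x‖
      = (‖gradient f x‖ / (‖gradient f x‖ + |f x|)) ^ 2 ∧
    (‖gradient f x‖ / (‖gradient f x‖ + |f x|)) ^ 2 ≤ 1 :=
  gradient_normalization_norm_bounded_general n f x a c hloc
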